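/- arXiv:2510.04075 — 2 statements merged into one kernel-verified Lean document; each statement's English description precedes it below -/
import Mathlib

section
/- For b ≠ 0 and w, x ∈ ℂ, the block matrices S_i (with local block [[0,b],[1/b,0]]) and T_i (with local block [[w,x],[x/b²,w]]) satisfy all defining relations of the singular twin monoid: S_i² = I; S_iS_j = S_jS_i and T_iT_j = T_jT_i and T_iS_j = S_jT_i for |i-j| ≥ 2; T_iS_i = S_iT_i; S_iS_{i+1}T_i = T_{i+1}S_iS_{i+1}; and T_iS_{i+1}S_i = S_{i+1}S_iT_{i+1}. -/
open Matrix

/-- The `n × n` matrix equal to the identity except that the `2 × 2` submatrix in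
(zero-indexed) rows/columns `i, i+1` is `M`. -/
def locBlock (n : ℕ) (M : Matrix (Fin 2) (Fin 2) ℂ) (i : ℕ) :
    Matrix (Fin n) (Fin n) ℂ :=
  Matrix.of fun k l =>
    if (k : ℕ) = i ∨ (k : ℕ) = i + 1 then
      if (l : ℕ) = i ∨ (l : ℕ) = i + 1 then
        M (if (k : ℕ) = i then 0 else 1) (if (l : ℕ) = i then 0 else 1)
      else 0
    else if k = l then 1 else 0

/-- The `n × n` matrix equal to the identity except that the `3 × 3` submatrix in
rows/columns `i, i+1, i+2` is `M`. -/
def loc3 (n : ℕ) (M : Matrix (Fin 3) (Fin 3) ℂ) (i : ℕ) :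
    Matrix (Fin n) (Fin n) ℂ :=
  Matrix.of fun k l =>
    if (k : ℕ) = i ∨ (k : ℕ) = i + 1 ∨ (k : ℕ) = i + 2 then
      if (l : ℕ) = i ∨ (l : ℕ) = i + 1 ∨ (l : ℕ) = i + 2 then
        M (if (k : ℕ) = i then 0 else if (k : ℕ) = i + 1 then 1 else 2)
          (if (l : ℕ) = i then 0 else if (l : ℕ) = i + 1 then 1 else 2)
      else 0
    else if k = l then 1 else 0

def emb0 (M : Matrix (Fin 2) (Fin 2) ℂ) : Matrix (Fin 3) (Fin 3) ℂ :=
  !![M 0 0, M 0 1, 0; M 1 0, M 1 1, 0; 0, 0, 1]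

def emb1 (M : Matrix (Fin 2) (Fin 2) ℂ) : Matrix (Fin 3) (Fin 3) ℂ :=
  !![1, 0, 0; 0, M 0 0, M 0 1; 0, M 1 0, M 1 1]

lemma locBlock_eq_loc3_emb0 (n i : ℕ) (M : Matrix (Fin 2) (Fin 2) ℂ) :
    locBlock n M i = loc3 n (emb0 M) i := by
  ext k l
  simp only [locBlock, loc3, emb0, of_apply]
  split_ifs <;> first | rfl | omega

lemma locBlock_eq_loc3_emb1 (n i : ℕ) (M : Matrix (Fin 2) (Fin 2) ℂ) :
    locBlock n M (i + 1) = loc3 n (emb1 M) i := by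
  ext k l
  simp only [locBlock, loc3, emb1, of_apply]
  split_ifs <;> first | rfl | omega

lemma locBlock_mul (n i : ℕ) (hi : i + 1 < n) (M N : Matrix (Fin 2) (Fin 2) ℂ) :
    locBlock n M i * locBlock n N i = locBlock n (M * N) i := by
  have hi' : i < n := by omega
  set a : Fin n := ⟨i, hi'⟩ with ha
  set a' : Fin n := ⟨i + 1, hi⟩ with ha'
  have haa : a ≠ a' := by simp [ha, ha', Fin.ext_iff]
  ext k l
  rw [Matrix.mul_apply]
  by_cases hk : (k : ℕ) = i ∨ (k : ℕ) = i + 1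
  · have hsum : ∀ m : Fin n, m ∈ Finset.univ → m ∉ ({a, a'} : Finset (Fin n)) →
        locBlock n M i k m * locBlock n N i m l = 0 := by
      intro m _ hm
      simp only [Finset.mem_insert, Finset.mem_singleton] at hm
      push_neg at hm
      have h1 : ¬((m : ℕ) = i) := fun h => hm.1 (Fin.ext h)
      have h2 : ¬((m : ℕ) = i + 1) := fun h => hm.2 (Fin.ext h)
      simp [locBlock, hk, h1, h2]
    rw [← Finset.sum_subset (Finset.subset_univ {a, a'}) hsum, Finset.sum_pair haa]
    simp only [locBlock, of_apply, Matrix.mul_apply, Fin.sum_univ_two, ha, ha']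
    by_cases hl : (l : ℕ) = i ∨ (l : ℕ) = i + 1 <;>
      rcases hk with hk | hk <;> simp_all
  · have hrow : ∀ m : Fin n, locBlock n M i k m = if k = m then 1 else 0 := by
      intro m; simp [locBlock, hk]
    simp only [hrow, ite_mul, one_mul, zero_mul]
    rw [Finset.sum_ite_eq]
    simp [locBlock, hk]

lemma loc3_mul (n i : ℕ) (hi : i + 2 < n) (M N : Matrix (Fin 3) (Fin 3) ℂ) :
    loc3 n M i * loc3 n N i = loc3 n (M * N) i := by
  have h0 : i < n := by omega
  have h1 : i + 1 < n := by omega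
  set a0 : Fin n := ⟨i, h0⟩ with ha0
  set a1 : Fin n := ⟨i + 1, h1⟩ with ha1
  set a2 : Fin n := ⟨i + 2, hi⟩ with ha2
  have hne : a0 ∉ ({a1, a2} : Finset (Fin n)) := by
    simp [ha0, ha1, ha2, Fin.ext_iff]
  have hne2 : a1 ≠ a2 := by simp [ha1, ha2, Fin.ext_iff]
  ext k l
  rw [Matrix.mul_apply]
  by_cases hk : (k : ℕ) = i ∨ (k : ℕ) = i + 1 ∨ (k : ℕ) = i + 2
  · have hsum : ∀ m : Fin n, m ∈ Finset.univ → m ∉ ({a0, a1, a2} : Finset (Fin n)) →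
        loc3 n M i k m * loc3 n N i m l = 0 := by
      intro m _ hm
      simp only [Finset.mem_insert, Finset.mem_singleton] at hm
      push_neg at hm
      have e1 : ¬((m : ℕ) = i) := fun h => hm.1 (Fin.ext h)
      have e2 : ¬((m : ℕ) = i + 1) := fun h => hm.2.1 (Fin.ext h)
      have e3 : ¬((m : ℕ) = i + 2) := fun h => hm.2.2 (Fin.ext h)
      simp [loc3, hk, e1, e2, e3]
    rw [← Finset.sum_subset (Finset.subset_univ {a0, a1, a2}) hsum,
      Finset.sum_insert hne, Finset.sum_pair hne2]
    simp only [loc3, of_apply, Matrix.mul_apply, Fin.sum_univ_three, ha0, ha1, ha2]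
    by_cases hl : (l : ℕ) = i ∨ (l : ℕ) = i + 1 ∨ (l : ℕ) = i + 2 <;>
      rcases hk with hk | hk | hk <;> simp_all <;> split_ifs <;>
        first | rfl | omega | ring
  · have hrow : ∀ m : Fin n, loc3 n M i k m = if k = m then 1 else 0 := by
      intro m; simp [loc3, hk]
    simp only [hrow, ite_mul, one_mul, zero_mul]
    rw [Finset.sum_ite_eq]
    simp [loc3, hk]

lemma locBlock_comm (n i j : ℕ) (hij : i + 2 ≤ j)
    (M N : Matrix (Fin 2) (Fin 2) ℂ) :
    locBlock n M i * locBlock n N j = locBlock n N j * locBlock n M i := by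
  ext k l
  rw [Matrix.mul_apply, Matrix.mul_apply]
  by_cases hk : (k : ℕ) = i ∨ (k : ℕ) = i + 1
  · have hk' : ¬((k : ℕ) = j ∨ (k : ℕ) = j + 1) := by omega
    have e1 : ∀ m : Fin n, locBlock n N j k m = if k = m then 1 else 0 := by
      intro m; simp [locBlock, hk']
    simp only [e1, ite_mul, one_mul, zero_mul]
    rw [Finset.sum_ite_eq]
    simp only [Finset.mem_univ, if_true]
    have e2 : ∀ m : Fin n, locBlock n M i k m * locBlock n N j m l
        = locBlock n M i k m * if m = l then 1 else 0 := by
      intro m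
      by_cases hm : (m : ℕ) = i ∨ (m : ℕ) = i + 1
      · have hm' : ¬((m : ℕ) = j ∨ (m : ℕ) = j + 1) := by omega
        simp [locBlock, hm']
      · simp [locBlock, hm, hk]
    simp only [e2, mul_ite, mul_one, mul_zero]
    rw [Finset.sum_ite_eq']
    simp
  · have e1 : ∀ m : Fin n, locBlock n M i k m = if k = m then 1 else 0 := by
      intro m; simp [locBlock, hk]
    simp only [e1, ite_mul, one_mul, zero_mul]
    rw [Finset.sum_ite_eq]
    simp only [Finset.mem_univ, if_true]
    by_cases hk2 : (k : ℕ) = j ∨ (k : ℕ) = j + 1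
    · have e2 : ∀ m : Fin n, locBlock n N j k m * locBlock n M i m l
          = locBlock n N j k m * if m = l then 1 else 0 := by
        intro m
        by_cases hm : (m : ℕ) = j ∨ (m : ℕ) = j + 1
        · have hm' : ¬((m : ℕ) = i ∨ (m : ℕ) = i + 1) := by omega
          simp [locBlock, hm']
        · simp [locBlock, hm, hk2]
      simp only [e2, mul_ite, mul_one, mul_zero]
      rw [Finset.sum_ite_eq']
      simp
    · have e2 : ∀ m : Fin n, locBlock n N j k m = if k = m then 1 else 0 := by
        intro m; simp [locBlock, hk2]
      simp only [e2, ite_mul, one_mul, zero_mul]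
      rw [Finset.sum_ite_eq]
      simp [locBlock, hk]

lemma locBlock_one (n i : ℕ) : locBlock n 1 i = 1 := by
  ext k l
  simp only [locBlock, of_apply, Matrix.one_apply]
  split_ifs <;> simp_all [Fin.ext_iff, Matrix.one_apply] <;> omega

set_option maxHeartbeats 2000000 in
/-- For `b ≠ 0` and `w, x ∈ ℂ` with `w² - x²/b² ≠ 0`, the block matrices
`S_i` (local block `!![0, b; 1/b, 0]`) and `T_i` (local block `!![w, x; x/b², w]`)
satisfy all the defining relations of the singular twin monoid. -/
theorem stmt9 (n : ℕ) (hn : 3 ≤ n) (b w x : ℂ) (hb : b ≠ 0)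
    (hT : w ^ 2 - x ^ 2 / b ^ 2 ≠ 0)
    (S T : ℕ → Matrix (Fin n) (Fin n) ℂ)
    (hS : ∀ i, S i = locBlock n !![0, b; 1 / b, 0] i)
    (hTdef : ∀ i, T i = locBlock n !![w, x; x / b ^ 2, w] i) :
    (∀ i : ℕ, i + 1 < n → S i ^ 2 = 1) ∧
    (∀ i j : ℕ, i + 1 < n → j + 1 < n → i + 2 ≤ j → S i * S j = S j * S i) ∧
    (∀ i j : ℕ, i + 1 < n → j + 1 < n → i + 2 ≤ j → T i * T j = T j * T i) ∧
    (∀ i j : ℕ, i + 1 < n → j + 1 < n → (i + 2 ≤ j ∨ j + 2 ≤ i) → T i * S j = S j * T i) ∧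
    (∀ i : ℕ, i + 1 < n → T i * S i = S i * T i) ∧
    (∀ i : ℕ, i + 2 < n → S i * S (i + 1) * T i = T (i + 1) * S i * S (i + 1)) ∧
    (∀ i : ℕ, i + 2 < n → T i * S (i + 1) * S i = S (i + 1) * S i * T (i + 1)) := by
  set Ms : Matrix (Fin 2) (Fin 2) ℂ := !![0, b; 1 / b, 0] with hMs
  set Mt : Matrix (Fin 2) (Fin 2) ℂ := !![w, x; x / b ^ 2, w] with hMt
  refine ⟨?_, ?_, ?_, ?_, ?_, ?_, ?_⟩
  · intro i hi
    rw [sq, hS, locBlock_mul n i hi]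
    have : Ms * Ms = 1 := by
      ext k l
      fin_cases k <;> fin_cases l <;>
        simp [hMs, Matrix.mul_apply, Fin.sum_univ_two, Matrix.one_apply] <;>
        field_simp
    rw [this, locBlock_one]
  · intro i j _ _ hij
    rw [hS, hS]
    exact locBlock_comm n i j hij _ _
  · intro i j _ _ hij
    rw [hTdef, hTdef]
    exact locBlock_comm n i j hij _ _
  · intro i j _ _ hij
    rcases hij with hij | hij
    · rw [hTdef, hS]; exact locBlock_comm n i j hij _ _
    · rw [hTdef, hS]; exact (locBlock_comm n j i hij _ _).symm
  · intro i hi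
    have h2 : Mt * Ms = Ms * Mt := by
      ext k l
      fin_cases k <;> fin_cases l <;>
        simp [hMs, hMt, Matrix.mul_apply, Fin.sum_univ_two] <;>
        (first | ring1 | (field_simp))
    rw [hTdef, hS, locBlock_mul n i hi, locBlock_mul n i hi, h2]
  · intro i hi
    have h3 : emb0 Ms * emb1 Ms * emb0 Mt = emb1 Mt * emb0 Ms * emb1 Ms := by
      ext k l
      fin_cases k <;> fin_cases l <;>
        simp [hMs, hMt, emb0, emb1, Matrix.mul_apply, Fin.sum_univ_three, Matrix.vecHead, Matrix.vecTail] <;>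
        (first | ring1 | (field_simp; ring))
    rw [hS i, hS (i + 1), hTdef i, hTdef (i + 1),
      locBlock_eq_loc3_emb0 n i Ms, locBlock_eq_loc3_emb1 n i Ms,
      locBlock_eq_loc3_emb0 n i Mt, locBlock_eq_loc3_emb1 n i Mt,
      loc3_mul n i hi, loc3_mul n i hi, loc3_mul n i hi, loc3_mul n i hi, h3]
  · intro i hi
    have h3 : emb0 Mt * emb1 Ms * emb0 Ms = emb1 Ms * emb0 Ms * emb1 Mt := by
      ext k l
      fin_cases k <;> fin_cases l <;>
        simp [hMs, hMt, emb0, emb1, Matrix.mul_apply, Fin.sum_univ_three, Matrix.vecHead, Matrix.vecTail] <;>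
        (first | ring1 | (field_simp; ring))
    rw [hS i, hS (i + 1), hTdef i, hTdef (i + 1),
      locBlock_eq_loc3_emb0 n i Ms, locBlock_eq_loc3_emb1 n i Ms,
      locBlock_eq_loc3_emb0 n i Mt, locBlock_eq_loc3_emb1 n i Mt,
      loc3_mul n i hi, loc3_mul n i hi, loc3_mul n i hi, loc3_mul n i hi, h3]
end

section
/- The Burau-type matrices B_i ∈ Mat_n(ℂ), equal to identity except the 2×2 block [[1-t, t],[2-t, t-1]] at rows/columns i, i+1, satisfy B_i² = I for every t ∈ ℂ, and B_iB_j = B_jB_i for |i-j| ≥ 2; hence s_i ↦ B_i defines a representation of the twin group T_n. -/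
open Matrix

/-- Relators of the twin group `T_n`: `s_i² = 1` and `s_i s_j = s_j s_i` for
`|i - j| ≥ 2`. -/
def twinRels (n : ℕ) : Set (FreeGroup (Fin (n - 1))) :=
  { r | (∃ i : Fin (n - 1), r = FreeGroup.of i * FreeGroup.of i) ∨
    (∃ i j : Fin (n - 1), (i : ℕ) + 2 ≤ (j : ℕ) ∧
      r = FreeGroup.of i * FreeGroup.of j * (FreeGroup.of j * FreeGroup.of i)⁻¹) }

/-- The twin group `T_n`, as a presented group. -/
def TwinGroup (n : ℕ) := PresentedGroup (twinRels n)

instance (n : ℕ) : Group (TwinGroup n) := by unfold TwinGroup; infer_instance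

namespace Stmt19Aux

variable {n : ℕ}

lemma locBlock_row_notin (M : Matrix (Fin 2) (Fin 2) ℂ) {i : ℕ} {k : Fin n}
    (h : ¬((k : ℕ) = i ∨ (k : ℕ) = i + 1)) (l : Fin n) :
    locBlock n M i k l = if k = l then 1 else 0 := by
  simp [locBlock, h]

lemma locBlock_col_notin (M : Matrix (Fin 2) (Fin 2) ℂ) {i : ℕ} {l : Fin n}
    (h : ¬((l : ℕ) = i ∨ (l : ℕ) = i + 1)) (k : Fin n) :
    locBlock n M i k l = if k = l then 1 else 0 := by
  by_cases hk : (k : ℕ) = i ∨ (k : ℕ) = i + 1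
  · have hkl : k ≠ l := by
      intro e; subst e; exact h hk
    simp [locBlock, hk, h, hkl]
  · exact locBlock_row_notin M hk l

lemma sub_one_row (M : Matrix (Fin 2) (Fin 2) ℂ) {i : ℕ} {k : Fin n}
    (h : ¬((k : ℕ) = i ∨ (k : ℕ) = i + 1)) (l : Fin n) :
    (locBlock n M i - 1) k l = 0 := by
  simp [Matrix.sub_apply, locBlock_row_notin M h, Matrix.one_apply]

lemma sub_one_col (M : Matrix (Fin 2) (Fin 2) ℂ) {i : ℕ} {l : Fin n}
    (h : ¬((l : ℕ) = i ∨ (l : ℕ) = i + 1)) (k : Fin n) :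
    (locBlock n M i - 1) k l = 0 := by
  simp [Matrix.sub_apply, locBlock_col_notin M h, Matrix.one_apply]

lemma locBlock_comm (M N : Matrix (Fin 2) (Fin 2) ℂ) {i j : ℕ} (hij : i + 2 ≤ j) :
    locBlock n M i * locBlock n N j = locBlock n N j * locBlock n M i := by
  have hPQ : (locBlock n M i - 1) * (locBlock n N j - 1) = 0 := by
    ext k l
    rw [Matrix.mul_apply]
    refine Finset.sum_eq_zero fun m _ => ?_
    by_cases hm : (m : ℕ) = i ∨ (m : ℕ) = i + 1
    · have : (locBlock n N j - 1) m l = 0 := sub_one_row N (by omega) l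
      simp [this]
    · have : (locBlock n M i - 1) k m = 0 := sub_one_col M hm k
      simp [this]
  have hQP : (locBlock n N j - 1) * (locBlock n M i - 1) = 0 := by
    ext k l
    rw [Matrix.mul_apply]
    refine Finset.sum_eq_zero fun m _ => ?_
    by_cases hm : (m : ℕ) = i ∨ (m : ℕ) = i + 1
    · have : (locBlock n N j - 1) k m = 0 := sub_one_col N (by omega) k
      simp [this]
    · have : (locBlock n M i - 1) m l = 0 := sub_one_row M hm l
      simp [this]
  have key : locBlock n M i * locBlock n N j - locBlock n N j * locBlock n M i =
      (locBlock n M i - 1) * (locBlock n N j - 1) -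
        (locBlock n N j - 1) * (locBlock n M i - 1) := by
    noncomm_ring
  rw [hPQ, hQP, sub_zero] at key
  exact sub_eq_zero.mp key

lemma locBlock_mul (M N : Matrix (Fin 2) (Fin 2) ℂ) {i : ℕ} (h : i + 1 < n) :
    locBlock n M i * locBlock n N i = locBlock n (M * N) i := by
  ext k l
  rw [Matrix.mul_apply]
  by_cases hk : (k : ℕ) = i ∨ (k : ℕ) = i + 1
  · rw [Fintype.sum_eq_add (⟨i, by omega⟩ : Fin n) (⟨i + 1, h⟩ : Fin n)
      (by simp [Fin.ext_iff]) ?_]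
    · by_cases hl : (l : ℕ) = i ∨ (l : ℕ) = i + 1
      · simp only [locBlock, Matrix.of_apply, hk, hl, if_true, Matrix.mul_apply,
          Fin.sum_univ_two]
        simp
      · have h1 : locBlock n N i ⟨i, by omega⟩ l = 0 := by
          simp [locBlock, hl]
        have h2 : locBlock n N i ⟨i + 1, h⟩ l = 0 := by
          simp [locBlock, hl]
        have h3 : locBlock n (M * N) i k l = 0 := by
          simp [locBlock, hk, hl]
        simp [h1, h2, h3]
    · intro m hm12
      obtain ⟨hm1, hm2⟩ := hm12
      have hm : ¬((m : ℕ) = i ∨ (m : ℕ) = i + 1) := by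
        simp only [ne_eq, Fin.ext_iff] at hm1 hm2
        omega
      have : locBlock n M i k m = 0 := by
        simp [locBlock, hk, hm]
      simp [this]
  · rw [Finset.sum_eq_single k]
    · rw [locBlock_row_notin M hk k, if_pos rfl, one_mul,
        locBlock_row_notin N hk l, locBlock_row_notin (M * N) hk l]
    · intro b _ hb
      rw [locBlock_row_notin M hk b, if_neg (Ne.symm hb), zero_mul]
    · intro hks; exact absurd (Finset.mem_univ k) hks

lemma locBlock_one {i : ℕ} (_h : i + 1 < n) :
    locBlock n (1 : Matrix (Fin 2) (Fin 2) ℂ) i = 1 := by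
  ext k l
  by_cases hk : (k : ℕ) = i ∨ (k : ℕ) = i + 1
  · by_cases hl : (l : ℕ) = i ∨ (l : ℕ) = i + 1
    · simp only [locBlock, Matrix.of_apply, hk, hl, if_true, Matrix.one_apply]
      rcases hk with hk | hk <;> rcases hl with hl | hl <;>
        simp [hk, hl, Fin.ext_iff, Fin.val_eq_val]
    · have : k ≠ l := by intro e; subst e; exact hl hk
      simp [locBlock, hk, hl, Matrix.one_apply, this]
  · simp [locBlock, hk, Matrix.one_apply]

end Stmt19Aux

/-- for every `t ∈ ℂ`, the block matrices `B_i` with local block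
`!![1 - t, t; 2 - t, t - 1]` satisfy `B_i² = 1` and `B_i B_j = B_j B_i` for
`|i - j| ≥ 2`; hence `s_i ↦ B_i` defines a representation of the twin group `T_n`. -/

theorem stmt19 (n : ℕ) (hn : 2 ≤ n) (t : ℂ) :
    (∀ i : ℕ, i + 1 < n → locBlock n !![1 - t, t; 2 - t, t - 1] i ^ 2 = 1) ∧
    (∀ i j : ℕ, i + 1 < n → j + 1 < n → i + 2 ≤ j →
      locBlock n !![1 - t, t; 2 - t, t - 1] i * locBlock n !![1 - t, t; 2 - t, t - 1] j =
        locBlock n !![1 - t, t; 2 - t, t - 1] j * locBlock n !![1 - t, t; 2 - t, t - 1] i) ∧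
    ∃ φ : TwinGroup n →* GL (Fin n) ℂ,
      ∀ i : Fin (n - 1),
        ((φ (PresentedGroup.of i) : GL (Fin n) ℂ) : Matrix (Fin n) (Fin n) ℂ) =
          locBlock n !![1 - t, t; 2 - t, t - 1] i := by
  set M : Matrix (Fin 2) (Fin 2) ℂ := !![1 - t, t; 2 - t, t - 1] with hMdef
  have hM : M * M = 1 := by
    ext a b
    fin_cases a <;> fin_cases b <;>
      simp [hMdef, Matrix.mul_apply, Fin.sum_univ_two, Matrix.one_apply] <;> ring
  have hsq : ∀ i : ℕ, i + 1 < n → locBlock n M i ^ 2 = 1 := by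
    intro i hi
    rw [sq, Stmt19Aux.locBlock_mul M M hi, hM, Stmt19Aux.locBlock_one hi]
  have hcomm : ∀ i j : ℕ, i + 2 ≤ j →
      locBlock n M i * locBlock n M j = locBlock n M j * locBlock n M i :=
    fun i j hij => Stmt19Aux.locBlock_comm M M hij
  refine ⟨hsq, fun i j hi hj hij => hcomm i j hij, ?_⟩
  have hb : ∀ i : Fin (n - 1), (i : ℕ) + 1 < n := fun i => by
    have := i.isLt; omega
  set u : Fin (n - 1) → GL (Fin n) ℂ := fun i =>
    ⟨locBlock n M i, locBlock n M i,
      by rw [← sq]; exact hsq i (hb i), by rw [← sq]; exact hsq i (hb i)⟩ with hu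
  have hrel : ∀ r ∈ twinRels n, FreeGroup.lift u r = 1 := by
    intro r hr
    rcases hr with ⟨i, rfl⟩ | ⟨i, j, hij, rfl⟩
    · rw [_root_.map_mul, FreeGroup.lift_apply_of]
      refine Units.ext ?_
      show locBlock n M i * locBlock n M i = 1
      rw [← sq]; exact hsq i (hb i)
    · simp only [_root_.map_mul, map_inv, FreeGroup.lift_apply_of, mul_inv_eq_one]
      refine Units.ext ?_
      show locBlock n M i * locBlock n M j = locBlock n M j * locBlock n M i
      exact hcomm i j hij
  refine ⟨PresentedGroup.toGroup hrel, fun i => ?_⟩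
  have h2 : PresentedGroup.toGroup hrel (PresentedGroup.of i) = u i :=
    PresentedGroup.toGroup.of hrel
  exact congrArg Units.val h2
end
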